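/- For Algorithm 1, the excess loss of an expert in the rounds where it participates cannot be too large: for every x ∈ X, Σ_{t=1}^{T} z_t^x·(ℓ_t(p_t) − ℓ_t(x)) ≤ 5·√(T·ln M). -/

import Mathlib

/-! In linearised form, `a` runs exponential weights on the surrogate losses `ℓA`. An asleep
expert is charged the forecaster's own loss `ℓp t`, and this makes the `a t`-average of `ℓA t`
equal to `ℓp t`; hence `a (t + 1) x = a t x * (1 + εA * dₜ)` with
`dₜ = z t x * (ℓp t - ℓ t x)`. Since `a (T + 1) x ≤ 1 = M * a 1 x`, the product of these
factors is at most `M`. Taking logarithms, `log (1 + y) ≥ y - y ^ 2` for `|y| ≤ 1 / 2` and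
`|dₜ| ≤ 2` give `εA * ∑ dₜ ≤ log M + 4 * εA ^ 2 * T`, which the choice of `εA` balances
to `5 * √(T * log M)`. -/

open Finset Real

lemma Real.sub_sq_le_log_one_add {y : ℝ} (hy : |y| ≤ 1 / 2) : y - y ^ 2 ≤ log (1 + y) := by
  -- the Taylor bound of order three is too weak near `y = -1 / 2`
  have hTaylor := abs_log_sub_add_sum_range_le (x := -y) (by rw [abs_neg]; linarith) 4
  norm_num [sum_range_succ] at hTaylor
  have htail : |y| ^ 5 / (1 - |y|) ≤ 2 * |y| ^ 5 := by
    rw [div_le_iff₀ (by linarith)]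
    have hy2 : (0 : ℝ) ≤ 1 - 2 * |y| := by linarith
    nlinarith [mul_nonneg (pow_nonneg (abs_nonneg y) 5) hy2]
  have hlow := (abs_le.mp (hTaylor.trans htail)).1
  rcases abs_cases y with ⟨hab, hy0⟩ | ⟨hab, hy0⟩ <;> rw [hab] at hlow hy
  · nlinarith [pow_nonneg hy0 3, pow_nonneg hy0 4, pow_nonneg hy0 5]
  · nlinarith [sq_nonneg y, sq_nonneg (y ^ 2), sq_nonneg (y + y ^ 2),
      sq_nonneg (y ^ 2 + y ^ 3)]

lemma Finset.sum_sub_sq_le_log_prod_one_add {ι : Type*} (s : Finset ι) {f : ι → ℝ}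
    (hf : ∀ t ∈ s, |f t| ≤ 1 / 2) :
    ∑ t ∈ s, (f t - f t ^ 2) ≤ log (∏ t ∈ s, (1 + f t)) := by
  rw [log_prod fun t ht => by linarith [(abs_le.mp (hf t ht)).1]]
  exact sum_le_sum fun t ht => sub_sq_le_log_one_add (hf t ht)

lemma Finset.sum_le_log_div_add_of_prod_one_add_mul_le {ι : Type*} (s : Finset ι)
    {d : ι → ℝ} {ε B C : ℝ} (hε : 0 < ε) (hεB : ε * B ≤ 1 / 2) (hd : ∀ t ∈ s, |d t| ≤ B)
    (hprod : ∏ t ∈ s, (1 + ε * d t) ≤ C) :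
    ∑ t ∈ s, d t ≤ log C / ε + ε * B ^ 2 * #s := by
  have hεd : ∀ t ∈ s, |ε * d t| ≤ 1 / 2 := fun t ht => by
    rw [abs_mul, abs_of_pos hε]
    exact (mul_le_mul_of_nonneg_left (hd t ht) hε.le).trans hεB
  have hpos : 0 < ∏ t ∈ s, (1 + ε * d t) :=
    prod_pos fun t ht => by linarith [(abs_le.mp (hεd t ht)).1]
  have hlog : ∑ t ∈ s, (ε * d t - (ε * d t) ^ 2) ≤ log C :=
    (sum_sub_sq_le_log_prod_one_add s hεd).trans (log_le_log hpos hprod)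
  have hsq : ∑ t ∈ s, (ε * d t) ^ 2 ≤ #s • (ε ^ 2 * B ^ 2) := by
    refine sum_le_card_nsmul _ _ _ fun t ht => ?_
    rw [mul_pow, ← sq_abs (d t)]
    gcongr
    exact hd t ht
  rw [sum_sub_distrib, ← mul_sum] at hlog
  rw [nsmul_eq_mul] at hsq
  rw [div_add' _ _ _ hε.ne', le_div_iff₀ hε]
  linarith

lemma Finset.abs_le_of_mul_sum_eq_sum_mul {ι : Type*} (s : Finset ι) {w ℓ : ι → ℝ}
    {c B : ℝ}
    (hw : ∀ y ∈ s, 0 ≤ w y) (hW : 0 < ∑ y ∈ s, w y) (hℓ : ∀ y ∈ s, |ℓ y| ≤ B)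
    (hc : c * ∑ y ∈ s, w y = ∑ y ∈ s, w y * ℓ y) : |c| ≤ B := by
  refine le_of_mul_le_mul_right ?_ hW
  calc |c| * ∑ y ∈ s, w y = |∑ y ∈ s, w y * ℓ y| := by rw [← hc, abs_mul, abs_of_pos hW]
    _ ≤ ∑ y ∈ s, w y * |ℓ y| := by
      refine (abs_sum_le_sum_abs _ _).trans_eq (sum_congr rfl fun y hy => ?_)
      rw [abs_mul, abs_of_nonneg (hw y hy)]
    _ ≤ ∑ y ∈ s, w y * B :=
      sum_le_sum fun y hy => mul_le_mul_of_nonneg_left (hℓ y hy) (hw y hy)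
    _ = B * ∑ y ∈ s, w y := by rw [← sum_mul, mul_comm]

lemma abs_mul_sub_le_two {z c l : ℝ} (hz : |z| ≤ 1) (hc : |c| ≤ 1) (hl : |l| ≤ 1) :
    |z * (c - l)| ≤ 2 := by
  rw [abs_mul]
  nlinarith [abs_sub c l, abs_nonneg z, abs_nonneg (c - l)]

lemma Finset.sum_mul_specialist_loss_eq {ι : Type*} (s : Finset ι) {a z ℓ : ι → ℝ}
    {c : ℝ}
    (ha : ∑ y ∈ s, a y = 1) (hc : c * ∑ y ∈ s, z y * a y = ∑ y ∈ s, z y * a y * ℓ y) :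
    ∑ y ∈ s, a y * (z y * ℓ y + (1 - z y) * c) = c := by
  have hexpand : ∀ y, a y * (z y * ℓ y + (1 - z y) * c) =
      z y * a y * ℓ y + c * a y - c * (z y * a y) := fun y => by ring
  simp only [hexpand, sum_sub_distrib, sum_add_distrib, ← mul_sum, ha, ← hc]
  ring

lemma eq_mul_prod_Icc_of_succ_eq_mul {M : Type*} [CommMonoid M] {f r : ℕ → M}
    (h : ∀ t, 1 ≤ t → f (t + 1) = f t * r t) (n : ℕ) :
    f (n + 1) = f 1 * ∏ t ∈ Icc 1 n, r t := by
  induction n with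
  | zero => simp
  | succ n ih => rw [prod_Icc_succ_top (by omega), h (n + 1) (by omega), ih, mul_assoc]

lemma Real.div_sqrt_div_eq_sqrt_mul {L : ℝ} (hL : 0 ≤ L) (T : ℝ) :
    L / √(L / T) = √(T * L) := by
  rw [sqrt_div hL, div_div_eq_mul_div, mul_div_right_comm, div_sqrt, sqrt_mul' _ hL, mul_comm]

lemma Real.sqrt_div_mul_self_eq_sqrt_mul (L : ℝ) {T : ℝ} (hT : 0 ≤ T) :
    √(L / T) * T = √(T * L) := by
  rcases hT.eq_or_lt with rfl | hT
  · simp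
  calc √(L / T) * T = √(L / T) * √(T ^ 2) := by rw [sqrt_sq hT.le]
    _ = √(T * L) := by rw [← sqrt_mul' _ (sq_nonneg T)]; congr 1; field_simp

lemma Finset.sum_le_five_mul_sqrt_of_prod_one_add_mul_le {ι : Type*} (s : Finset ι)
    {d : ι → ℝ} {C : ℝ} (hC : 1 < C) (hs : 16 * log C ≤ #s) (hd : ∀ t ∈ s, |d t| ≤ 2)
    (hprod : ∏ t ∈ s, (1 + √(log C / #s) * d t) ≤ C) :
    ∑ t ∈ s, d t ≤ 5 * √(#s * log C) := by
  have hlogC : 0 < log C := log_pos hC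
  have hs_pos : (0 : ℝ) < #s := by linarith
  have hε_le : √(log C / #s) * 2 ≤ 1 / 2 := by
    have : log C / #s ≤ (1 / 4) ^ 2 := by rw [div_le_iff₀ hs_pos]; linarith
    linarith [(sqrt_le_left (by norm_num)).mpr this]
  have hregret := sum_le_log_div_add_of_prod_one_add_mul_le s
    (sqrt_pos.mpr (div_pos hlogC hs_pos)) hε_le hd hprod
  rw [div_sqrt_div_eq_sqrt_mul hlogC.le] at hregret
  linarith [sqrt_div_mul_self_eq_sqrt_mul (log C) hs_pos.le]

theorem algorithm1_specialist_lemma_general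
    {U X : Type*} [Fintype X]
    (M T : ℕ)
    (hM2 : 2 ≤ M)
    (hTM : 16 * Real.log M ≤ (T : ℝ))
    (u : ℕ → U) (ℓ : ℕ → X → ℝ)
    (hℓ : ∀ t x, -1 ≤ ℓ t x ∧ ℓ t x ≤ 1)
    (εA : ℝ)
    (hεA : εA = Real.sqrt (Real.log M / T))
    (a : ℕ → X → ℝ) (β : ℕ → X → U → ℝ)
    (ha1 : ∀ x, a 1 x = 1 / M)
    (z : ℕ → X → ℝ) (hz : ∀ t x, z t x = β t x (u t))
    (w : ℕ → X → ℝ) (hw : ∀ t x, w t x = z t x * a t x)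
    (W : ℕ → ℝ) (hW : ∀ t, W t = ∑ x, w t x)
    (p : ℕ → X → ℝ) (hp : ∀ t x, p t x = w t x / W t)
    (ℓp : ℕ → ℝ) (hℓp : ∀ t, ℓp t = ∑ x, p t x * ℓ t x)
    (ℓA : ℕ → X → ℝ)
    (hℓA : ∀ t x, ℓA t x = z t x * ℓ t x + (1 - z t x) * ℓp t)
    (ha : ∀ t x, 1 ≤ t →
      a (t + 1) x = a t x * (1 + εA * ((∑ y, a t y * ℓA t y) - ℓA t x)))
    (hapos : ∀ t x, 1 ≤ t → 0 < a t x)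
    (hasum : ∀ t, 1 ≤ t → ∑ x, a t x = 1)
    (hβpos : ∀ t x v, 1 ≤ t → 0 < β t x v ∧ β t x v < 1)
    (hWpos : ∀ t, 1 ≤ t → 0 < W t)
    (x : X) :
    ∑ t ∈ Finset.Icc 1 T, z t x * (ℓp t - ℓ t x) ≤
      5 * Real.sqrt ((T : ℝ) * Real.log M) := by
  have hz01 : ∀ t, 1 ≤ t → ∀ y, 0 < z t y ∧ z t y < 1 := fun t ht y =>
    hz t y ▸ hβpos t y (u t) ht
  have hmean : ∀ t, 1 ≤ t →
      ℓp t * ∑ y, z t y * a t y = ∑ y, z t y * a t y * ℓ t y := fun t ht => by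
    have hWt : ∑ y, z t y * a t y ≠ 0 := by simpa only [hW, hw] using (hWpos t ht).ne'
    simp only [hℓp, hp, hW, hw, sum_mul]
    exact sum_congr rfl fun y _ => by field_simp
  have hd : ∀ t ∈ Icc 1 T, |z t x * (ℓp t - ℓ t x)| ≤ 2 := by
    intro t ht
    have ht1 := (mem_Icc.mp ht).1
    have hℓp_abs : |ℓp t| ≤ 1 :=
      abs_le_of_mul_sum_eq_sum_mul univ
        (fun y _ => mul_nonneg (hz01 t ht1 y).1.le (hapos t y ht1).le)
        (by simpa only [hW, hw] using hWpos t ht1) (fun y _ => abs_le.mpr (hℓ t y))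
        (hmean t ht1)
    exact abs_mul_sub_le_two (abs_le.mpr ⟨by linarith [hz01 t ht1 x], (hz01 t ht1 x).2.le⟩)
      hℓp_abs (abs_le.mpr (hℓ t x))
  have hstep : ∀ t, 1 ≤ t → a (t + 1) x = a t x * (1 + εA * (z t x * (ℓp t - ℓ t x))) := by
    intro t ht
    have hmix : ∑ y, a t y * ℓA t y = ℓp t := by
      simp only [hℓA]
      exact sum_mul_specialist_loss_eq univ (hasum t ht) (hmean t ht)
    rw [ha t x ht, hmix, hℓA]
    ring
  have hprod : ∏ t ∈ Icc 1 T, (1 + εA * (z t x * (ℓp t - ℓ t x))) ≤ M := by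
    have hle : a (T + 1) x ≤ 1 := hasum (T + 1) (by omega) ▸
      single_le_sum (fun y _ => (hapos (T + 1) y (by omega)).le) (mem_univ x)
    rw [eq_mul_prod_Icc_of_succ_eq_mul (f := fun t => a t x) hstep T, ha1, one_div,
      inv_mul_le_iff₀ (by positivity), mul_one] at hle
    exact hle
  have hcard : (#(Icc 1 T) : ℝ) = T := by simp
  rw [← hcard] at hTM hεA ⊢
  exact sum_le_five_mul_sqrt_of_prod_one_add_mul_le _ (by exact_mod_cast hM2) hTM hd
    (hεA ▸ hprod)

/-- For Algorithm 1, the excess loss of an expert in the rounds where it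
participates cannot be too large: at most 5·√(T·ln M). -/
theorem algorithm1_specialist_lemma
    {U X : Type*} [Fintype U] [Fintype X] [DecidableEq U]
    (N M T : ℕ)
    (hcardU : Fintype.card U = N) (hcardX : Fintype.card X = M)
    (hN1 : 1 ≤ N) (hM2 : 2 ≤ M)
    (hTN : 16 * N ≤ T) (hTM : 16 * Real.log M ≤ (T : ℝ))
    (u : ℕ → U) (ℓ : ℕ → X → ℝ)
    (hℓ : ∀ t x, -1 ≤ ℓ t x ∧ ℓ t x ≤ 1)
    (εA εB : ℝ)
    (hεA : εA = Real.sqrt (Real.log M / T))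
    (hεB : εB = Real.sqrt ((N : ℝ) / T))
    (a : ℕ → X → ℝ) (β : ℕ → X → U → ℝ)
    (ha1 : ∀ x, a 1 x = 1 / M)
    (hβ1 : ∀ x v, β 1 x v = 1 / 2)
    (z : ℕ → X → ℝ) (hz : ∀ t x, z t x = β t x (u t))
    (w : ℕ → X → ℝ) (hw : ∀ t x, w t x = z t x * a t x)
    (W : ℕ → ℝ) (hW : ∀ t, W t = ∑ x, w t x)
    (p : ℕ → X → ℝ) (hp : ∀ t x, p t x = w t x / W t)
    (ℓp : ℕ → ℝ) (hℓp : ∀ t, ℓp t = ∑ x, p t x * ℓ t x)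
    (ℓA : ℕ → X → ℝ)
    (hℓA : ∀ t x, ℓA t x = z t x * ℓ t x + (1 - z t x) * ℓp t)
    (ha : ∀ t x, 1 ≤ t →
      a (t + 1) x = a t x * (1 + εA * ((∑ y, a t y * ℓA t y) - ℓA t x)))
    (hβu : ∀ t x, 1 ≤ t →
      β (t + 1) x (u t) = β t x (u t) *
        (1 + εB * ((β t x (u t) * ℓ t x + (1 - β t x (u t)) * ℓp t) - ℓ t x)))
    (hβo : ∀ t x v, 1 ≤ t → v ≠ u t → β (t + 1) x v = β t x v)
    (hapos : ∀ t x, 1 ≤ t → 0 < a t x)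
    (hasum : ∀ t, 1 ≤ t → ∑ x, a t x = 1)
    (hβpos : ∀ t x v, 1 ≤ t → 0 < β t x v ∧ β t x v < 1)
    (hWpos : ∀ t, 1 ≤ t → 0 < W t)
    (x : X) :
    ∑ t ∈ Finset.Icc 1 T, z t x * (ℓp t - ℓ t x) ≤
      5 * Real.sqrt ((T : ℝ) * Real.log M) :=
  algorithm1_specialist_lemma_general M T hM2 hTM u ℓ hℓ εA hεA a β ha1 z hz w hw W hW p hp ℓp hℓp
    ℓA hℓA ha hapos hasum hβpos hWpos x
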